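/- Let p, q ≥ 1 and let H ∈ ℂ^{p×q}. Then for all unit vectors s, w ∈ ℂ^q: | ‖Hs‖² − ‖Hw‖² | ≤ 2‖H‖_F² · √(1 − |sᴴw|²). -/

import Mathlib

/-- Euclidean norm of a complex vector. -/
noncomputable def cnorm {k : ℕ} (v : Fin k → ℂ) : ℝ :=
  Real.sqrt (∑ i, ‖v i‖ ^ 2)

/-- Squared Frobenius norm of a complex matrix. -/
noncomputable def frobSq {p q : ℕ} (A : Matrix (Fin p) (Fin q) ℂ) : ℝ :=
  ∑ i, ∑ j, ‖A i j‖ ^ 2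

/-!
Multiplying `w` by a unimodular phase `c` with `c ⟪s, w⟫ = |⟪s, w⟫| =: ρ` changes neither
`‖Hw‖` nor `|sᴴw|`, and makes `⟪s, cw⟫ = ρ` real. Then
`‖Hs‖² − ‖H(cw)‖² = Re ⟪H(s − cw), H(s + cw)⟫ ≤ K² ‖s − cw‖ ‖s + cw‖` for any bound `K` on the
operator norm of `H`, and `‖s ∓ cw‖² = 2 ∓ 2ρ` turns the right-hand side into `2K² √(1 − ρ²)`.
The Frobenius norm is such a bound `K`.
-/

open scoped InnerProductSpace
open RCLike WithLp

section InnerProductSpace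

variable {𝕜 E F : Type*} [RCLike 𝕜] [NormedAddCommGroup E] [InnerProductSpace 𝕜 E]
  [NormedAddCommGroup F] [InnerProductSpace 𝕜 F]

lemma re_inner_sub_add_eq_norm_sq_sub_norm_sq (u v : E) :
    re ⟪u - v, u + v⟫_𝕜 = ‖u‖ ^ 2 - ‖v‖ ^ 2 := by
  rw [inner_sub_left, inner_add_right, inner_add_right, map_sub, map_add, map_add,
    inner_re_symm (𝕜 := 𝕜) v u, ← norm_sq_eq_re_inner, ← norm_sq_eq_re_inner]
  ring

lemma abs_norm_sq_sub_norm_sq_le (𝕜 : Type*) [RCLike 𝕜] [InnerProductSpace 𝕜 E] (u v : E) :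
    |‖u‖ ^ 2 - ‖v‖ ^ 2| ≤ ‖u - v‖ * ‖u + v‖ := by
  rw [← re_inner_sub_add_eq_norm_sq_sub_norm_sq (𝕜 := 𝕜)]
  exact (abs_re_le_norm _).trans (norm_inner_le_norm _ _)

lemma norm_sub_mul_norm_add_of_norm_eq_one {s v : E} (hs : ‖s‖ = 1) (hv : ‖v‖ = 1) :
    ‖s - v‖ * ‖s + v‖ = 2 * √(1 - re ⟪s, v⟫_𝕜 ^ 2) := by
  have hsub : ‖s - v‖ ^ 2 = 2 - 2 * re ⟪s, v⟫_𝕜 := by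
    rw [@norm_sub_sq 𝕜, hs, hv]; ring
  have hadd : ‖s + v‖ ^ 2 = 2 + 2 * re ⟪s, v⟫_𝕜 := by
    rw [@norm_add_sq 𝕜, hs, hv]; ring
  rw [← Real.sqrt_sq (norm_nonneg (s - v)), ← Real.sqrt_sq (norm_nonneg (s + v)),
    ← Real.sqrt_mul (sq_nonneg _), hsub, hadd,
    show (2 - 2 * re ⟪s, v⟫_𝕜) * (2 + 2 * re ⟪s, v⟫_𝕜) = 2 ^ 2 * (1 - re ⟪s, v⟫_𝕜 ^ 2) by ring,
    Real.sqrt_mul (sq_nonneg 2), Real.sqrt_sq zero_le_two]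

theorem abs_norm_sq_apply_sub_norm_sq_apply_le (T : E →ₗ[𝕜] F) {K : ℝ}
    (hT : ∀ x, ‖T x‖ ≤ K * ‖x‖) {s w : E} (hs : ‖s‖ = 1) (hw : ‖w‖ = 1) :
    |‖T s‖ ^ 2 - ‖T w‖ ^ 2| ≤ 2 * K ^ 2 * √(1 - ‖⟪s, w⟫_𝕜‖ ^ 2) := by
  have hK : 0 ≤ K := by simpa [hs] using (norm_nonneg _).trans (hT s)
  obtain ⟨c, hc, hca⟩ := exists_norm_eq_mul_self ⟪s, w⟫_𝕜
  set v := c • w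
  have hv : ‖v‖ = 1 := by rw [norm_smul, hc, hw, one_mul]
  have hTv : ‖T v‖ = ‖T w‖ := by rw [map_smul, norm_smul, hc, one_mul]
  have hsv : re ⟪s, v⟫_𝕜 = ‖⟪s, w⟫_𝕜‖ := by rw [inner_smul_right, ← hca, ofReal_re]
  calc |‖T s‖ ^ 2 - ‖T w‖ ^ 2|
      ≤ ‖T (s - v)‖ * ‖T (s + v)‖ := by
        rw [← hTv, map_sub, map_add]; exact abs_norm_sq_sub_norm_sq_le 𝕜 _ _
    _ ≤ (K * ‖s - v‖) * (K * ‖s + v‖) :=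
        mul_le_mul (hT _) (hT _) (norm_nonneg _) (by positivity)
    _ = 2 * K ^ 2 * √(1 - ‖⟪s, w⟫_𝕜‖ ^ 2) := by
        rw [mul_mul_mul_comm, norm_sub_mul_norm_add_of_norm_eq_one (𝕜 := 𝕜) hs hv, hsv]; ring

end InnerProductSpace

lemma cnorm_eq_norm_toLp {k : ℕ} (v : Fin k → ℂ) : cnorm v = ‖toLp 2 v‖ :=
  (EuclideanSpace.norm_eq _).symm

section Frobenius

open Matrix
open scoped Matrix.Norms.Frobenius

lemma frobSq_eq_frobenius_norm_sq {p q : ℕ} (A : Matrix (Fin p) (Fin q) ℂ) :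
    frobSq A = ‖A‖ ^ 2 := by
  rw [frobenius_norm_def, ← Real.rpow_natCast, ← Real.rpow_mul (by positivity)]
  norm_num [frobSq]

lemma norm_toLp_mulVec_le {m n α : Type*} [Fintype m] [Fintype n] [RCLike α]
    (A : Matrix m n α) (v : n → α) : ‖toLp 2 (A *ᵥ v)‖ ≤ ‖A‖ * ‖toLp 2 v‖ := by
  rw [← frobenius_norm_replicateCol (ι := Unit), ← frobenius_norm_replicateCol (ι := Unit),
    replicateCol_mulVec]
  exact frobenius_norm_mul _ _

lemma norm_toLpLin_apply_le_sqrt_frobSq {p q : ℕ} (H : Matrix (Fin p) (Fin q) ℂ)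
    (x : EuclideanSpace ℂ (Fin q)) : ‖toLpLin 2 2 H x‖ ≤ √(frobSq H) * ‖x‖ := by
  rw [frobSq_eq_frobenius_norm_sq, Real.sqrt_sq (norm_nonneg _)]
  exact norm_toLp_mulVec_le H x.ofLp

end Frobenius

theorem stmt13_general (p q : ℕ) (H : Matrix (Fin p) (Fin q) ℂ)
    (s w : Fin q → ℂ) (hs : cnorm s = 1) (hw : cnorm w = 1) :
    |cnorm (H.mulVec s) ^ 2 - cnorm (H.mulVec w) ^ 2| ≤
      2 * frobSq H * Real.sqrt (1 - ‖dotProduct (star s) w‖ ^ 2) := by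
  rw [cnorm_eq_norm_toLp] at hs hw
  have key := abs_norm_sq_apply_sub_norm_sq_apply_le _ (norm_toLpLin_apply_le_sqrt_frobSq H) hs hw
  rwa [Real.sq_sqrt (by unfold frobSq; positivity), EuclideanSpace.inner_toLp_toLp,
    dotProduct_comm, Matrix.toLpLin_toLp, Matrix.toLpLin_toLp, Matrix.toLin'_apply,
    Matrix.toLin'_apply, ← cnorm_eq_norm_toLp, ← cnorm_eq_norm_toLp] at key

/-- For unit vectors `s, w`:
`| ‖Hs‖² − ‖Hw‖² | ≤ 2‖H‖_F² √(1 − |sᴴw|²)`. -/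
theorem stmt13 (p q : ℕ) (hp : 1 ≤ p) (hq : 1 ≤ q) (H : Matrix (Fin p) (Fin q) ℂ)
    (s w : Fin q → ℂ) (hs : cnorm s = 1) (hw : cnorm w = 1) :
    |cnorm (H.mulVec s) ^ 2 - cnorm (H.mulVec w) ^ 2| ≤
      2 * frobSq H * Real.sqrt (1 - ‖dotProduct (star s) w‖ ^ 2) :=
  stmt13_general p q H s w hs hw
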